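/- Assume μ_n < 0 (the defocusing case) and let β̄ be the unique zero of g in (μ_n, ∞). Then for every β ∈ ℝ \ {μ_1, …, μ_n}, one has (β − μ_j)·g(β) > 0 for all j = 1, …, n if and only if β < μ_1 or μ_n < β < β̄. -/

import Mathlib

open Set Finset

/-! Write `g x = 1 + ∑ j, x / (μ j - x)`. When every `μ j` is negative, each summand is below
`-1` to the left of its pole, so `g < 1 - n < 0` to the left of all poles, and each summand
decreases strictly to the right of its pole, so `g` is strictly decreasing on `(μₙ, ∞)` and
positive exactly on `(μₙ, β̄)` there. Since `(β - μⱼ) g(β) > 0` for all `j` forces `β` to lie on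
one side of all the `μ j` with `g β` of the matching sign, the two branches follow. -/

theorem div_sub_self_lt_neg_one {m x : ℝ} (hm : m < 0) (hx : x < m) : x / (m - x) < -1 := by
  rw [div_lt_iff₀ (sub_pos.2 hx)]
  linarith

theorem strictAntiOn_div_sub_self {m : ℝ} (hm : m < 0) :
    StrictAntiOn (fun x => x / (m - x)) (Ioi m) := by
  intro a ha b hb hab
  dsimp only
  rw [← neg_div_neg_eq, neg_sub, ← neg_div_neg_eq a, neg_sub,
    div_lt_div_iff₀ (sub_pos.2 hb) (sub_pos.2 ha)]
  nlinarith

noncomputable def secularFun {ι : Type*} [Fintype ι] (μ : ι → ℝ) (x : ℝ) : ℝ :=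
  1 + x * ∑ j, 1 / (μ j - x)

section Secular

variable {ι : Type*} [Fintype ι] (μ : ι → ℝ)

theorem secularFun_eq_one_add_sum_div (x : ℝ) :
    secularFun μ x = 1 + ∑ j, x / (μ j - x) := by
  simp only [secularFun, Finset.mul_sum, mul_one_div]

variable [Nonempty ι] {μ}

theorem secularFun_neg_of_forall_lt (hμ : ∀ j, μ j < 0) {x : ℝ} (hx : ∀ j, x < μ j) :
    secularFun μ x < 0 := by
  have hsum : ∑ j, x / (μ j - x) < ∑ _j : ι, (-1 : ℝ) :=
    Finset.sum_lt_sum_of_nonempty univ_nonempty fun j _ => div_sub_self_lt_neg_one (hμ j) (hx j)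
  have hcard : (1 : ℝ) ≤ Fintype.card ι := by exact_mod_cast Fintype.card_pos
  simp only [sum_const, card_univ, nsmul_eq_mul, mul_neg, mul_one] at hsum
  rw [secularFun_eq_one_add_sum_div]
  linarith

theorem secularFun_strictAntiOn (hμ : ∀ j, μ j < 0) {m : ℝ} (hm : ∀ j, μ j ≤ m) :
    StrictAntiOn (secularFun μ) (Ioi m) := by
  intro a ha b hb hab
  simp only [secularFun_eq_one_add_sum_div, add_lt_add_iff_left]
  refine Finset.sum_lt_sum_of_nonempty univ_nonempty fun j _ => ?_
  exact strictAntiOn_div_sub_self (hμ j) ((hm j).trans_lt ha) ((hm j).trans_lt hb) hab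

end Secular

theorem forall_sub_mul_pos_iff {ι : Type*} (μ : ι → ℝ) {i j : ι} (hi : ∀ k, μ i ≤ μ k)
    (hj : ∀ k, μ k ≤ μ j) (β c : ℝ) :
    (∀ k, 0 < (β - μ k) * c) ↔ (β < μ i ∧ c < 0) ∨ (μ j < β ∧ 0 < c) := by
  constructor
  · intro h
    rcases pos_and_pos_or_neg_and_neg_of_mul_pos (h i) with ⟨-, hc⟩ | ⟨hβ, hc⟩
    · rcases pos_and_pos_or_neg_and_neg_of_mul_pos (h j) with ⟨hβ, -⟩ | ⟨-, hc'⟩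
      · exact Or.inr ⟨sub_pos.1 hβ, hc⟩
      · exact absurd hc (not_lt.2 hc'.le)
    · exact Or.inl ⟨sub_neg.1 hβ, hc⟩
  · rintro (⟨hβ, hc⟩ | ⟨hβ, hc⟩) k
    · exact mul_pos_of_neg_of_neg (by linarith [hi k]) hc
    · exact mul_pos (by linarith [hj k]) hc

theorem defocusing_branch_interval (n : ℕ) (hn : 2 ≤ n) (μ : Fin n → ℝ) (hμ : Monotone μ)
    (g : ℝ → ℝ)
    (hg : ∀ β : ℝ, (∀ j, β ≠ μ j) → g β = 1 + β * ∑ j, 1 / (μ j - β))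
    (hdef : μ ⟨n - 1, by omega⟩ < 0)
    (βb : ℝ) (hβb : μ ⟨n - 1, by omega⟩ < βb) (hzero : g βb = 0)
    (β : ℝ) (hβ : ∀ j, β ≠ μ j) :
    (∀ j, 0 < (β - μ j) * g β) ↔
      (β < μ ⟨0, by omega⟩ ∨ (μ ⟨n - 1, by omega⟩ < β ∧ β < βb)) := by
  set N : Fin n := ⟨n - 1, by omega⟩
  set Z : Fin n := ⟨0, by omega⟩
  have : Nonempty (Fin n) := ⟨Z⟩
  have hle : ∀ j, μ j ≤ μ N := fun j => hμ (Fin.le_def.2 (by simp only [N]; omega))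
  have hge : ∀ j, μ Z ≤ μ j := fun j => hμ (Fin.le_def.2 (Nat.zero_le _))
  have hneg : ∀ j, μ j < 0 := fun j => (hle j).trans_lt hdef
  have hgβ : g β = secularFun μ β := hg β hβ
  have hgβb : secularFun μ βb = 0 :=
    (hg βb fun j => ((hle j).trans_lt hβb).ne').symm.trans hzero
  rw [forall_sub_mul_pos_iff μ hge hle, hgβ]
  refine or_congr (and_iff_left_of_imp fun hβZ => ?_) (and_congr_right fun hβN => ?_)
  · exact secularFun_neg_of_forall_lt hneg fun j => hβZ.trans_le (hge j)
  · rw [← hgβb]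
    exact (secularFun_strictAntiOn hneg hle).lt_iff_gt hβb hβN
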